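/- Let X be a finite set with a distinguished element x₀ and Y a finite set. Let W assign to each x ∈ X a pmf W(·|x) on Y with W(y|x₀) > 0 for all y, let P̃ᴬ be a pmf on X with P̃ᴬ(x₀) = 0, and let Pᴮ be a pmf on X. For (μ₁,μ₂) ∈ ℝ² define P^{μ₁,μ₂} : X × Y → ℝ by P^{μ₁,μ₂}(x,y) = ((1−μ₁)(1−μ₂)·1{x = x₀} + (1−μ₁)·μ₂·P̃ᴬ(x) + μ₁·Pᴮ(x))·W(y|x), and let I(μ₁,μ₂) denote the mutual information of P^{μ₁,μ₂}. Then the map μ₁ ↦ I(μ₁, 0) has a derivative at μ₁ = 0, equal to ∑_{x∈X} Pᴮ(x)·D(W(·|x) ‖ W(·|x₀)). -/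

import Mathlib

open Real

/-!
Along `μ₂ = 0` the input distribution is the segment `δ_{x₀} + μ₁ (Pᴮ - δ_{x₀})`. For any input
`p` and any direction `r` with `∑ r = 0`, the derivative of `I(p + μ r)` at `μ = 0` is
`∑ₓ r(x) D(W(·|x) ‖ q)` with `q` the output distribution of `p`: differentiating the output
distribution inside the logarithm only contributes `∑_y (W r)(y) = ∑ r = 0`. At `p = δ_{x₀}` the
output distribution is `W(·|x₀)`, whose divergence from itself vanishes.
-/

/-- Kullback–Leibler divergence of finite-alphabet "distributions" `p`, `q`. -/
noncomputable def klDiv {Z : Type*} [Fintype Z] (p q : Z → ℝ) : ℝ :=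
  ∑ z, p z * (Real.log (p z) - Real.log (q z))

/-- Mutual information of a joint function `P` on a product of finite alphabets. -/
noncomputable def mutualInfo {U Y : Type*} [Fintype U] [Fintype Y] (P : U → Y → ℝ) : ℝ :=
  ∑ u, ∑ y, P u y *
    (Real.log (P u y) - Real.log (∑ y', P u y') - Real.log (∑ u', P u' y))

section

open Finset

variable {X Y : Type*} [Fintype X]

noncomputable def channelOutput (W : X → Y → ℝ) (p : X → ℝ) (y : Y) : ℝ :=
  ∑ x, p x * W x y

lemma sum_channelOutput [Fintype Y] {W : X → Y → ℝ} (hW1 : ∀ x, ∑ y, W x y = 1) (p : X → ℝ) :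
    ∑ y, channelOutput W p y = ∑ x, p x := by
  simp only [channelOutput]
  rw [sum_comm]
  exact sum_congr rfl fun x _ => by rw [← mul_sum, hW1, mul_one]

lemma channelOutput_add_mul (W : X → Y → ℝ) (p r : X → ℝ) (μ : ℝ) (y : Y) :
    channelOutput W (fun x => p x + μ * r x) y
      = channelOutput W p y + μ * channelOutput W r y := by
  simp only [channelOutput, mul_sum, ← sum_add_distrib]
  exact sum_congr rfl fun x _ => by ring

lemma mutualInfo_channel [Fintype Y] {W : X → Y → ℝ} (hW1 : ∀ x, ∑ y, W x y = 1) (p : X → ℝ) :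
    mutualInfo (fun x y => p x * W x y)
      = ∑ x, ∑ y, p x * W x y * (log (W x y) - log (channelOutput W p y)) := by
  refine sum_congr rfl fun x _ => sum_congr rfl fun y _ => ?_
  rw [← mul_sum, hW1, mul_one]
  change _ = _ * (_ - log (∑ x', p x' * W x' y))
  rcases eq_or_ne (p x) 0 with hp | hp
  · simp [hp]
  rcases eq_or_ne (W x y) 0 with hw | hw
  · simp [hw]
  rw [log_mul hp hw]
  ring

lemma hasDerivAt_affine (a b t : ℝ) : HasDerivAt (fun μ : ℝ => a + μ * b) b t := by
  simpa using ((hasDerivAt_id t).mul_const b).const_add a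

theorem hasDerivAt_mutualInfo_line [Fintype Y] {W : X → Y → ℝ} (hW1 : ∀ x, ∑ y, W x y = 1)
    {p r : X → ℝ} (hq : ∀ y, channelOutput W p y ≠ 0) (hr : ∑ x, r x = 0) :
    HasDerivAt (fun μ => mutualInfo (fun x y => (p x + μ * r x) * W x y))
      (∑ x, r x * klDiv (W x) (channelOutput W p)) 0 := by
  set q := channelOutput W p
  set s := channelOutput W r
  have hterm : ∀ x y, HasDerivAt
      (fun μ => (p x + μ * r x) * W x y * (log (W x y) - log (q y + μ * s y)))
      (r x * W x y * (log (W x y) - log (q y)) - p x * W x y * (s y / q y)) 0 := by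
    intro x y
    have hlog := ((hasDerivAt_affine (q y) (s y) 0).log (by simpa using hq y)).const_sub
      (log (W x y))
    refine (((hasDerivAt_affine (p x) (r x) 0).mul_const (W x y)).fun_mul hlog).congr_deriv ?_
    simp only [zero_mul, add_zero]
    ring
  have hsum : ∑ x, ∑ y, (r x * W x y * (log (W x y) - log (q y)) - p x * W x y * (s y / q y))
      = ∑ x, r x * klDiv (W x) q := by
    have hdrift : ∑ x, ∑ y, p x * W x y * (s y / q y) = 0 := by
      rw [sum_comm, ← hr, ← sum_channelOutput hW1 r]
      refine sum_congr rfl fun y _ => ?_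
      rw [← sum_mul]
      exact mul_div_cancel₀ (s y) (hq y)
    simp only [sum_sub_distrib]
    rw [hdrift, sub_zero]
    simp only [klDiv, mul_sum, mul_assoc]
  simp only [mutualInfo_channel hW1, channelOutput_add_mul]
  rw [← hsum]
  exact HasDerivAt.fun_sum fun x _ => HasDerivAt.fun_sum fun y _ => hterm x y

end

theorem stmt_2_general {X Y : Type*} [Fintype X] [Fintype Y] [DecidableEq X]
    (x₀ : X) (W : X → Y → ℝ)
    (hW1 : ∀ x, ∑ y, W x y = 1)
    (hWpos : ∀ y, 0 < W x₀ y)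
    (PtA PB : X → ℝ)
    (hPB1 : ∑ x, PB x = 1)
    (I : ℝ → ℝ → ℝ)
    (hI : ∀ μ₁ μ₂, I μ₁ μ₂ = mutualInfo (fun (x : X) (y : Y) =>
      ((1 - μ₁) * (1 - μ₂) * (if x = x₀ then 1 else 0)
        + (1 - μ₁) * μ₂ * PtA x + μ₁ * PB x) * W x y)) :
    HasDerivAt (fun μ₁ => I μ₁ 0) (∑ x, PB x * klDiv (W x) (W x₀)) 0 := by
  set δ : X → ℝ := fun x => if x = x₀ then 1 else 0
  have hline : (fun μ₁ => I μ₁ 0)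
      = fun μ => mutualInfo (fun x y => (δ x + μ * (PB x - δ x)) * W x y) := by
    funext μ
    rw [hI]
    congr 1
    funext x y
    simp only [δ]
    ring
  have hout : channelOutput W δ = W x₀ := by
    funext y
    simp [channelOutput, δ]
  have hr : ∑ x, (PB x - δ x) = 0 := by simp [Finset.sum_sub_distrib, hPB1, δ]
  have hq : ∀ y, channelOutput W δ y ≠ 0 := by simpa [hout] using fun y => (hWpos y).ne'
  rw [hline]
  convert hasDerivAt_mutualInfo_line hW1 hq hr using 1
  simp [hout, sub_mul, Finset.sum_sub_distrib, δ, klDiv]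

theorem stmt_2 {X Y : Type*} [Fintype X] [Fintype Y] [DecidableEq X]
    (x₀ : X) (W : X → Y → ℝ)
    (hW0 : ∀ x y, 0 ≤ W x y) (hW1 : ∀ x, ∑ y, W x y = 1)
    (hWpos : ∀ y, 0 < W x₀ y)
    (PtA PB : X → ℝ)
    (hPtA0 : ∀ x, 0 ≤ PtA x) (hPtA1 : ∑ x, PtA x = 1) (hPtAx0 : PtA x₀ = 0)
    (hPB0 : ∀ x, 0 ≤ PB x) (hPB1 : ∑ x, PB x = 1)
    (I : ℝ → ℝ → ℝ)
    (hI : ∀ μ₁ μ₂, I μ₁ μ₂ = mutualInfo (fun (x : X) (y : Y) =>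
      ((1 - μ₁) * (1 - μ₂) * (if x = x₀ then 1 else 0)
        + (1 - μ₁) * μ₂ * PtA x + μ₁ * PB x) * W x y)) :
    HasDerivAt (fun μ₁ => I μ₁ 0) (∑ x, PB x * klDiv (W x) (W x₀)) 0 :=
  stmt_2_general x₀ W hW1 hWpos PtA PB hPB1 I hI
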